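/- Let J : M_p([0,∞)×{0,1}) → ℕ ∪ {∞} be the map ξ ↦ ξ([0,τ⁰(ξ)]×{1}), where τ⁰(ξ) = sup{t ≥ 0 : ξ([0,t]×{0}) = 0}. Then J is continuous (with respect to vague convergence of point measures) at every point measure ξ whose atoms have pairwise distinct time coordinates and for which τ⁰(ξ) is finite and is not the time coordinate of any atom of ξ(·×{1}). -/

import Mathlib

open MeasureTheory Filter

/-- A point measure on `[0,∞) × {0,1}` (labels encoded by `Bool`, with `false` the label 0
and `true` the label 1): a countable sum of Dirac masses at points with nonnegative
time coordinate. -/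
def IsPointMeasure (ξ : Measure (ℝ × Bool)) : Prop :=
  ∃ (ι : Type) (_ : Countable ι) (x : ι → ℝ × Bool),
    (∀ i, 0 ≤ (x i).1) ∧ ξ = Measure.sum (fun i => Measure.dirac (x i))

/-- Vague convergence of measures on `ℝ × Bool`: convergence of the integrals of every
continuous compactly supported function. -/
def VagueTendsto (ξn : ℕ → Measure (ℝ × Bool)) (ξ : Measure (ℝ × Bool)) : Prop :=
  ∀ f : ℝ × Bool → ℝ, Continuous f → HasCompactSupport f →
    Tendsto (fun n => ∫ x, f x ∂(ξn n)) atTop (nhds (∫ x, f x ∂ξ))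

/-- `τ⁰(ξ)`: the time of the first label-0 event of `ξ`. -/
noncomputable def tau0 (ξ : Measure (ℝ × Bool)) : ℝ :=
  sSup {t : ℝ | 0 ≤ t ∧ ξ (Set.Icc 0 t ×ˢ ({false} : Set Bool)) = 0}

/-- `J(ξ) = ξ([0, τ⁰(ξ)] × {1})`: the number of label-1 events before the first
label-0 event. -/
noncomputable def Jmap (ξ : Measure (ℝ × Bool)) : ENNReal :=
  ξ (Set.Icc 0 (tau0 ξ) ×ˢ ({true} : Set Bool))

open Set
open scoped ENNReal

/-!
Write `τ = τ⁰(ξ)`. The limit `ξ` has no label-0 event in `[0, τ)`, one in every `[0, τ + ε]`, and,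
being integer valued with no label-1 atom at `τ`, no label-1 event in some window
`[τ - δ, τ + δ]`. Squeezing a continuous compactly supported function between the indicators of
a compact `K` and of an open `U ⊇ K` gives the portmanteau bounds `limsup ξₙ(K) ≤ ξ(U)` and
`ξ(K) ≤ liminf ξₙ(U)`; as the `ξₙ` are integer valued these become exact eventual bounds on
counts. So eventually `τ⁰(ξₙ) ∈ [τ - δ/2, τ + δ/2]` and `ξₙ` has `J(ξ)` label-1 events both in
`[0, τ - δ/2]` and in `[0, τ + δ/2]`, whence `J(ξₙ) = J(ξ)`.
-/

theorem exists_continuous_indicator_le_le_indicator {X : Type*} [TopologicalSpace X] [T2Space X]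
    [LocallyCompactSpace X] {K U : Set X} (hK : IsCompact K) (hU : IsOpen U) (hKU : K ⊆ U) :
    ∃ f : X → ℝ, Continuous f ∧ HasCompactSupport f ∧ 0 ≤ f ∧ K.indicator 1 ≤ f ∧
      f ≤ U.indicator 1 := by
  obtain ⟨f, hfK, hfU, hfc, hf01⟩ := exists_continuous_one_zero_of_isCompact hK
    hU.isClosed_compl (disjoint_compl_right_iff_subset.2 hKU)
  refine ⟨f, f.continuous, hfc, fun x => (hf01 x).1, fun x => ?_, fun x => ?_⟩
  · by_cases hx : x ∈ K
    · simp [hx, hfK hx]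
    · simpa [hx] using (hf01 x).1
  · by_cases hx : x ∈ U
    · simpa [hx] using (hf01 x).2
    · simp [hx, hfU hx]

section Portmanteau

variable {X : Type*} [MeasurableSpace X] {μ : Measure X} {f : X → ℝ} {K U : Set X}

theorem measure_le_lintegral_ofReal (hK : MeasurableSet K) (hKf : K.indicator 1 ≤ f) :
    μ K ≤ ∫⁻ x, ENNReal.ofReal (f x) ∂μ := by
  rw [← lintegral_indicator_one hK]
  refine lintegral_mono fun x => ?_
  by_cases hx : x ∈ K
  · simpa [hx] using hKf x
  · simp [hx]

theorem lintegral_ofReal_le_measure (hU : MeasurableSet U) (hfU : f ≤ U.indicator 1) :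
    ∫⁻ x, ENNReal.ofReal (f x) ∂μ ≤ μ U := by
  rw [← lintegral_indicator_one hU]
  refine lintegral_mono fun x => ?_
  by_cases hx : x ∈ U
  · simpa [hx] using hfU x
  · simpa [hx] using hfU x

theorem integrable_of_le_indicator (hf : AEStronglyMeasurable f μ) (hf0 : 0 ≤ f)
    (hU : MeasurableSet U) (hfU : f ≤ U.indicator 1) (hμU : μ U ≠ ∞) : Integrable f μ := by
  refine ⟨hf, (hasFiniteIntegral_iff_ofReal (ae_of_all _ hf0)).2 ?_⟩
  exact (lintegral_ofReal_le_measure hU hfU).trans_lt hμU.lt_top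

variable [TopologicalSpace X] [OpensMeasurableSpace X] [T2Space X] [LocallyCompactSpace X]
  {μn : ℕ → Measure X} {c : ℝ≥0∞}

theorem eventually_measure_lt_of_measure_lt
    (hconv : ∀ f : X → ℝ, Continuous f → HasCompactSupport f →
      Tendsto (fun n => ∫ x, f x ∂μn n) atTop (nhds (∫ x, f x ∂μ)))
    (hK : IsCompact K) (hU : IsOpen U) (hKU : K ⊆ U) (hfin : ∀ᶠ n in atTop, μn n U ≠ ∞)
    (h : μ U < c) : ∀ᶠ n in atTop, μn n K < c := by
  obtain ⟨f, hfc, hfs, hf0, hKf, hfU⟩ := exists_continuous_indicator_le_le_indicator hK hU hKU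
  have hint : ∀ ν : Measure X, ν U ≠ ∞ → Integrable f ν := fun ν hν =>
    integrable_of_le_indicator hfc.aestronglyMeasurable hf0 hU.measurableSet hfU hν
  have hlim : ENNReal.ofReal (∫ x, f x ∂μ) < c := by
    rw [ofReal_integral_eq_lintegral_ofReal (hint μ (h.trans_le le_top).ne) (ae_of_all _ hf0)]
    exact (lintegral_ofReal_le_measure hU.measurableSet hfU).trans_lt h
  filter_upwards [((ENNReal.continuous_ofReal.tendsto _).comp
    (hconv f hfc hfs)).eventually_lt_const hlim, hfin] with n hn hUn
  calc μn n K ≤ ∫⁻ x, ENNReal.ofReal (f x) ∂μn n := measure_le_lintegral_ofReal hK.measurableSet hKf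
    _ = ENNReal.ofReal (∫ x, f x ∂μn n) :=
      (ofReal_integral_eq_lintegral_ofReal (hint _ hUn) (ae_of_all _ hf0)).symm
    _ < c := hn

theorem eventually_lt_measure_of_lt_measure [IsLocallyFiniteMeasure μ]
    (hconv : ∀ f : X → ℝ, Continuous f → HasCompactSupport f →
      Tendsto (fun n => ∫ x, f x ∂μn n) atTop (nhds (∫ x, f x ∂μ)))
    (hK : IsCompact K) (hU : IsOpen U) (hKU : K ⊆ U) (h : c < μ K) :
    ∀ᶠ n in atTop, c < μn n U := by
  obtain ⟨f, hfc, hfs, hf0, hKf, hfU⟩ := exists_continuous_indicator_le_le_indicator hK hU hKU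
  have hlim : c < ENNReal.ofReal (∫ x, f x ∂μ) := by
    rw [ofReal_integral_eq_lintegral_ofReal (hfc.integrable_of_hasCompactSupport hfs)
      (ae_of_all _ hf0)]
    exact h.trans_le (measure_le_lintegral_ofReal hK.measurableSet hKf)
  filter_upwards [((ENNReal.continuous_ofReal.tendsto _).comp
    (hconv f hfc hfs)).eventually_const_lt hlim] with n hn
  -- the integral of a non-integrable function is `0`, so `hn` forces integrability
  have hint : Integrable f (μn n) := Integrable.of_integral_ne_zero fun h0 => by simp [h0] at hn
  calc c < ENNReal.ofReal (∫ x, f x ∂μn n) := hn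
    _ = ∫⁻ x, ENNReal.ofReal (f x) ∂μn n :=
      ofReal_integral_eq_lintegral_ofReal hint (ae_of_all _ hf0)
    _ ≤ μn n U := lintegral_ofReal_le_measure hU.measurableSet hfU

theorem eventually_measure_ne_top_of_measure_ne_zero [IsLocallyFiniteMeasure μ]
    (hconv : ∀ f : X → ℝ, Continuous f → HasCompactSupport f →
      Tendsto (fun n => ∫ x, f x ∂μn n) atTop (nhds (∫ x, f x ∂μ)))
    (hK : IsCompact K) (h : μ K ≠ 0) : ∀ᶠ n in atTop, μn n K ≠ ∞ := by
  obtain ⟨f, hfc, hfs, hf0, hKf, -⟩ :=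
    exists_continuous_indicator_le_le_indicator hK isOpen_univ (subset_univ K)
  have hpos : 0 < ∫ x, f x ∂μ := by
    rw [← ENNReal.ofReal_pos, ofReal_integral_eq_lintegral_ofReal
      (hfc.integrable_of_hasCompactSupport hfs) (ae_of_all _ hf0)]
    exact (pos_iff_ne_zero.2 h).trans_le (measure_le_lintegral_ofReal hK.measurableSet hKf)
  filter_upwards [(hconv f hfc hfs).eventually_ne hpos.ne'] with n hn
  exact ((measure_le_lintegral_ofReal hK.measurableSet hKf).trans_lt
    (Integrable.of_integral_ne_zero hn).lintegral_lt_top).ne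

end Portmanteau

theorem measure_Icc_prod_le_of_measure_Icc_prod_eq_zero {α : Type*} [MeasurableSpace α]
    {μ : Measure (ℝ × α)} {S : Set α} {a b c s : ℝ} (h : μ (Icc a b ×ˢ S) = 0) (has : a ≤ s) :
    μ (Icc c b ×ˢ S) ≤ μ (Icc c s ×ˢ S) := by
  calc μ (Icc c b ×ˢ S) ≤ μ (Icc c s ×ˢ S ∪ Icc a b ×ˢ S) := by
        refine measure_mono fun p ⟨hp, hpS⟩ => ?_
        rcases le_or_gt p.1 s with hps | hps
        · exact Or.inl ⟨⟨hp.1, hps⟩, hpS⟩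
        · exact Or.inr ⟨⟨has.trans hps.le, hp.2⟩, hpS⟩
    _ ≤ μ (Icc c s ×ˢ S) + μ (Icc a b ×ˢ S) := measure_union_le _ _
    _ = μ (Icc c s ×ˢ S) := by rw [h, add_zero]

namespace IsPointMeasure

variable {μ : Measure (ℝ × Bool)}

theorem exists_enat_eq (hμ : IsPointMeasure μ) {A : Set (ℝ × Bool)} (hA : MeasurableSet A) :
    ∃ e : ℕ∞, μ A = e := by
  obtain ⟨ι, _, x, -, rfl⟩ := hμ
  refine ⟨(x ⁻¹' A).encard, ?_⟩
  rw [← ENNReal.tsum_set_one, tsum_subtype (x ⁻¹' A) (fun _ => (1 : ℝ≥0∞)),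
    Measure.sum_apply _ hA]
  exact tsum_congr fun i => by rw [Measure.dirac_apply' _ hA]; rfl

theorem ae_nonneg (hμ : IsPointMeasure μ) : ∀ᵐ p ∂μ, 0 ≤ p.1 := by
  obtain ⟨ι, _, x, hx, rfl⟩ := hμ
  rw [Measure.ae_sum_iff' (measurableSet_le measurable_const measurable_fst)]
  exact fun i => (ae_dirac_iff (measurableSet_le measurable_const measurable_fst)).2 (hx i)

theorem measure_Ioo_prod_le (hμ : IsPointMeasure μ) (a b : ℝ) (S : Set Bool) :
    μ (Ioo a b ×ˢ S) ≤ μ (Icc 0 b ×ˢ S) := by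
  refine measure_mono_ae ?_
  filter_upwards [hμ.ae_nonneg] with p hp hpU
  exact ⟨⟨hp, hpU.1.2.le⟩, hpU.2⟩

theorem exists_pos_measure_Icc_prod_eq_zero [IsLocallyFiniteMeasure μ] (hμ : IsPointMeasure μ)
    {t : ℝ} {S : Set Bool} (h : μ ({t} ×ˢ S) = 0) :
    ∃ δ > 0, μ (Icc (t - δ) (t + δ) ×ˢ S) = 0 := by
  have hmeas : ∀ r : ℝ, MeasurableSet (Icc (t - r) (t + r) ×ˢ S) :=
    fun r => measurableSet_Icc.prod (S.toFinite).measurableSet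
  have hlim := tendsto_measure_biInter_gt (μ := μ) (a := 0)
    (fun r _ => (hmeas r).nullMeasurableSet)
    (fun i j _ hij => prod_mono (Icc_subset_Icc (by linarith) (by linarith)) subset_rfl)
    ⟨1, one_pos, (isCompact_Icc.prod (S.toFinite).isCompact).measure_lt_top.ne⟩
  have hinter : ⋂ r > (0 : ℝ), Icc (t - r) (t + r) ×ˢ S ⊆ {t} ×ˢ S := by
    intro p hp
    simp only [mem_iInter, mem_prod, mem_Icc] at hp
    refine ⟨le_antisymm (le_of_forall_pos_le_add fun r hr => ?_)
      (le_of_forall_pos_le_add fun r hr => ?_), (hp 1 one_pos).2⟩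
    · linarith [(hp r hr).1.2]
    · linarith [(hp r hr).1.1]
  rw [measure_mono_null hinter h] at hlim
  obtain ⟨δ, hlt, hδ⟩ := ((hlim.eventually_lt_const zero_lt_one).and self_mem_nhdsWithin).exists
  obtain ⟨e, he⟩ := hμ.exists_enat_eq (hmeas δ)
  refine ⟨δ, hδ, ?_⟩
  simp only [Function.comp_apply, he] at hlt ⊢
  simpa [← ENat.toENNReal_one, ENat.toENNReal_lt, Order.lt_one_iff] using hlt

theorem exists_forall_measure_Icc_prod_eq [IsLocallyFiniteMeasure μ] (hμ : IsPointMeasure μ)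
    {t : ℝ} {S : Set Bool} (h : μ ({t} ×ˢ S) = 0) :
    ∃ δ > 0, ∃ e : ℕ∞, e ≠ ⊤ ∧ ∀ s ∈ Icc (t - δ) (t + δ), μ (Icc 0 s ×ˢ S) = e := by
  obtain ⟨δ, hδ, hwindow⟩ := hμ.exists_pos_measure_Icc_prod_eq_zero h
  obtain ⟨e, he⟩ := hμ.exists_enat_eq (measurableSet_Icc.prod S.toFinite.measurableSet :
    MeasurableSet (Icc 0 (t + δ) ×ˢ S))
  have hfin : μ (Icc 0 (t + δ) ×ˢ S) < ∞ :=
    (isCompact_Icc.prod S.toFinite.isCompact).measure_lt_top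
  refine ⟨δ, hδ, e, by simpa [he] using hfin.ne, fun s hs => he ▸ le_antisymm ?_ ?_⟩
  · exact measure_mono (prod_mono (Icc_subset_Icc_right hs.2) subset_rfl)
  · exact measure_Icc_prod_le_of_measure_Icc_prod_eq_zero hwindow hs.1

end IsPointMeasure

section FirstLabelZero

variable {ν : Measure (ℝ × Bool)}

theorem tau0_nonneg (ν : Measure (ℝ × Bool)) : 0 ≤ tau0 ν :=
  Real.sSup_nonneg fun _ ht => ht.1

theorem lt_of_measure_Icc_false_ne_zero {t u : ℝ}
    (ht : t ∈ {t : ℝ | 0 ≤ t ∧ ν (Icc 0 t ×ˢ ({false} : Set Bool)) = 0})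
    (hu : ν (Icc 0 u ×ˢ {false}) ≠ 0) : t < u := by
  by_contra! htu
  exact hu (measure_mono_null (prod_mono (Icc_subset_Icc_right htu) subset_rfl) ht.2)

theorem tau0_le {u : ℝ} (hu0 : 0 ≤ u) (hu : ν (Icc 0 u ×ˢ {false}) ≠ 0) : tau0 ν ≤ u :=
  Real.sSup_le (fun _ ht => (lt_of_measure_Icc_false_ne_zero ht hu).le) hu0

theorem le_tau0 {s u : ℝ} (hs : ν (Icc 0 s ×ˢ {false}) = 0) (hu : ν (Icc 0 u ×ˢ {false}) ≠ 0) :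
    s ≤ tau0 ν := by
  rcases lt_or_ge s 0 with hs0 | hs0
  · exact hs0.le.trans (tau0_nonneg ν)
  · exact le_csSup ⟨u, fun _ ht => (lt_of_measure_Icc_false_ne_zero ht hu).le⟩ ⟨hs0, hs⟩

theorem Jmap_eq_of_le_of_le {s u : ℝ} {c : ℝ≥0∞} (hs : ν (Icc 0 s ×ˢ {false}) = 0) (hu0 : 0 ≤ u)
    (hu : ν (Icc 0 u ×ˢ {false}) ≠ 0) (hcs : c ≤ ν (Icc 0 s ×ˢ {true}))
    (hcu : ν (Icc 0 u ×ˢ {true}) ≤ c) : Jmap ν = c :=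
  le_antisymm
    ((measure_mono (prod_mono (Icc_subset_Icc_right (tau0_le hu0 hu)) subset_rfl)).trans hcu)
    (hcs.trans (measure_mono (prod_mono (Icc_subset_Icc_right (le_tau0 hs hu)) subset_rfl)))

theorem measure_Icc_false_eq_zero_of_lt_tau0
    (hne : {t : ℝ | 0 ≤ t ∧ ν (Icc 0 t ×ˢ ({false} : Set Bool)) = 0}.Nonempty) {s : ℝ}
    (hs : s < tau0 ν) : ν (Icc 0 s ×ˢ {false}) = 0 := by
  obtain ⟨t, ht, hst⟩ := exists_lt_of_lt_csSup hne hs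
  exact measure_mono_null (prod_mono (Icc_subset_Icc_right hst.le) subset_rfl) ht.2

theorem measure_Icc_false_ne_zero_of_tau0_lt
    (hbdd : BddAbove {t : ℝ | 0 ≤ t ∧ ν (Icc 0 t ×ˢ ({false} : Set Bool)) = 0}) {u : ℝ}
    (hu : tau0 ν < u) : ν (Icc 0 u ×ˢ {false}) ≠ 0 := fun h =>
  (le_csSup hbdd ⟨(tau0_nonneg ν).trans hu.le, h⟩).not_gt hu

end FirstLabelZero

section Boxes

variable {ξ : Measure (ℝ × Bool)} {ξn : ℕ → Measure (ℝ × Bool)} {b b' : ℝ} {S : Set Bool}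

theorem Icc_zero_prod_subset_Ioo_prod (hb : b < b') : Icc 0 b ×ˢ S ⊆ Ioo (-1) b' ×ˢ S :=
  prod_mono (fun _ ht => ⟨by linarith [ht.1], by linarith [ht.2]⟩) subset_rfl

theorem VagueTendsto.eventually_measure_Icc_prod_le (hconv : VagueTendsto ξn ξ)
    (hξ : IsPointMeasure ξ) (hξn : ∀ n, IsPointMeasure (ξn n)) (hb : b < b') {e : ℕ∞}
    (he : e ≠ ⊤) (hfin : ∀ᶠ n in atTop, ξn n (Icc 0 b' ×ˢ S) ≠ ∞)
    (h : ξ (Icc 0 b' ×ˢ S) ≤ e) : ∀ᶠ n in atTop, ξn n (Icc 0 b ×ˢ S) ≤ e := by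
  have hlt : ξ (Ioo (-1) b' ×ˢ S) < e + 1 := ((hξ.measure_Ioo_prod_le _ _ _).trans h).trans_lt
    (ENNReal.lt_add_right (by simpa using he) one_ne_zero)
  filter_upwards [eventually_measure_lt_of_measure_lt hconv
    (isCompact_Icc.prod S.toFinite.isCompact) (isOpen_Ioo.prod (isOpen_discrete S))
    (Icc_zero_prod_subset_Ioo_prod hb)
    (hfin.mono fun n hn => ne_top_of_le_ne_top hn ((hξn n).measure_Ioo_prod_le _ _ _)) hlt]
    with n hn
  obtain ⟨a, ha⟩ := (hξn n).exists_enat_eq (measurableSet_Icc.prod S.toFinite.measurableSet)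
  rw [ha, ← ENat.toENNReal_one, ← ENat.toENNReal_add, ENat.toENNReal_lt,
    ENat.lt_add_one_iff he] at hn
  rw [ha]
  exact_mod_cast hn

theorem VagueTendsto.eventually_le_measure_Icc_prod [IsLocallyFiniteMeasure ξ]
    (hconv : VagueTendsto ξn ξ) (hξn : ∀ n, IsPointMeasure (ξn n)) (hb : b < b') {e : ℕ∞}
    (h : e ≤ ξ (Icc 0 b ×ˢ S)) : ∀ᶠ n in atTop, e ≤ ξn n (Icc 0 b' ×ˢ S) := by
  rcases eq_or_ne e 0 with rfl | he0
  · simp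
  have he : (e : ℝ≥0∞) ≠ ⊤ := ne_top_of_le_ne_top
    (isCompact_Icc.prod S.toFinite.isCompact).measure_lt_top.ne h
  have hlt : (e : ℝ≥0∞) - 1 < ξ (Icc 0 b ×ˢ S) :=
    (ENNReal.sub_lt_self he (by simpa using he0) one_ne_zero).trans_le h
  filter_upwards [eventually_lt_measure_of_lt_measure hconv
    (isCompact_Icc.prod S.toFinite.isCompact) (isOpen_Ioo.prod (isOpen_discrete S))
    (Icc_zero_prod_subset_Ioo_prod hb) hlt] with n hn
  obtain ⟨a, ha⟩ := (hξn n).exists_enat_eq (measurableSet_Icc.prod S.toFinite.measurableSet)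
  have := hn.trans_le ((hξn n).measure_Ioo_prod_le _ _ _)
  rw [ha, ← ENat.toENNReal_one, ← ENat.toENNReal_sub, ENat.toENNReal_lt] at this
  rw [ha, ENat.toENNReal_le, ← tsub_add_cancel_of_le (Order.one_le_iff_ne_zero.2 he0)]
  exact Order.add_one_le_of_lt this

theorem VagueTendsto.eventually_measure_Icc_prod_ne_zero [IsLocallyFiniteMeasure ξ]
    (hconv : VagueTendsto ξn ξ) (hξn : ∀ n, IsPointMeasure (ξn n)) (hb : b < b')
    (h : ξ (Icc 0 b ×ˢ S) ≠ 0) : ∀ᶠ n in atTop, ξn n (Icc 0 b' ×ˢ S) ≠ 0 :=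
  (eventually_lt_measure_of_lt_measure hconv (isCompact_Icc.prod S.toFinite.isCompact)
    (isOpen_Ioo.prod (isOpen_discrete S)) (Icc_zero_prod_subset_Ioo_prod hb)
    (pos_iff_ne_zero.2 h)).mono fun n hn => (hn.trans_le ((hξn n).measure_Ioo_prod_le _ _ _)).ne'

end Boxes

/-- `J` is (sequentially) continuous with respect to vague convergence of
point measures, at every locally finite point measure `ξ` whose atoms have pairwise
distinct time coordinates and for which `τ⁰(ξ)` is finite and is not the time coordinate
of any atom of `ξ(· × {1})`. -/
theorem Jmap_continuous_at
    (ξ : Measure (ℝ × Bool)) [IsLocallyFiniteMeasure ξ]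
    (hpoint : ∃ (ι : Type) (_ : Countable ι) (x : ι → ℝ × Bool),
      (∀ i, 0 ≤ (x i).1) ∧ ξ = Measure.sum (fun i => Measure.dirac (x i)) ∧
        Function.Injective (fun i => (x i).1))
    (hne : {t : ℝ | 0 ≤ t ∧ ξ (Set.Icc 0 t ×ˢ ({false} : Set Bool)) = 0}.Nonempty)
    (hbdd : BddAbove {t : ℝ | 0 ≤ t ∧ ξ (Set.Icc 0 t ×ˢ ({false} : Set Bool)) = 0})
    (hnoatom : ξ ({tau0 ξ} ×ˢ ({true} : Set Bool)) = 0)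
    (ξn : ℕ → Measure (ℝ × Bool)) (hξn : ∀ n, IsPointMeasure (ξn n))
    (hconv : VagueTendsto ξn ξ) :
    Tendsto (fun n => Jmap (ξn n)) atTop (nhds (Jmap ξ)) := by
  obtain ⟨ι, hι, x, hx0, hxsum, -⟩ := hpoint
  have hξ : IsPointMeasure ξ := ⟨ι, hι, x, hx0, hxsum⟩
  set τ := tau0 ξ
  have hτ : 0 ≤ τ := tau0_nonneg ξ
  obtain ⟨δ, hδ, e, he, hcount⟩ := hξ.exists_forall_measure_Icc_prod_eq hnoatom
  have hfin : ∀ b ≤ τ + δ, ∀ S : Set Bool, ∀ᶠ n in atTop, ξn n (Icc 0 b ×ˢ S) ≠ ∞ := by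
    intro b hb S
    have hpos : ξ (Icc 0 (τ + δ) ×ˢ univ) ≠ 0 := fun h0 =>
      measure_Icc_false_ne_zero_of_tau0_lt hbdd (lt_add_of_pos_right τ hδ)
        (measure_mono_null (prod_mono subset_rfl (subset_univ _)) h0)
    filter_upwards [eventually_measure_ne_top_of_measure_ne_zero hconv
      (isCompact_Icc.prod isCompact_univ) hpos] with n hn
    exact ne_top_of_le_ne_top hn
      (measure_mono (prod_mono (Icc_subset_Icc_right hb) (subset_univ S)))
  refine tendsto_const_nhds.congr' ?_
  filter_upwards [
    hconv.eventually_measure_Icc_prod_le hξ hξn (b := τ - δ / 2) (b' := τ - δ / 4) (by linarith)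
      ENat.zero_ne_top (hfin _ (by linarith) _)
      (by simpa using measure_Icc_false_eq_zero_of_lt_tau0 hne (by linarith : τ - δ / 4 < τ)),
    hconv.eventually_measure_Icc_prod_ne_zero hξn (b' := τ + δ / 2) (by linarith : τ + δ / 4 < _)
      (measure_Icc_false_ne_zero_of_tau0_lt hbdd (by linarith)),
    hconv.eventually_le_measure_Icc_prod hξn (b' := τ - δ / 2) (by linarith : τ - 3 * δ / 4 < _)
      (hcount _ ⟨by linarith, by linarith⟩).ge,
    hconv.eventually_measure_Icc_prod_le hξ hξn (b := τ + δ / 2) (by linarith) he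
      (hfin _ le_rfl _) (hcount _ ⟨by linarith, le_rfl⟩).le] with n h1 h2 h3 h4
  rw [show Jmap ξ = e from hcount τ ⟨by linarith, by linarith⟩,
    Jmap_eq_of_le_of_le (by simpa using h1) (by linarith) h2 h3 h4]
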